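/- Let 1 ≤ n < d and let E ⊂ ℝ^d be an n-ADR set having big pieces of Lipschitz graphs with constants M and δ. Then E has big projections in plenty of directions: there exists δ' > 0, depending only on n, d, M, δ and the ADR constants of E, such that for every x ∈ E and every r ∈ (0, diam(E)] there is an n-plane V_{x,r} ∈ G(d,n) with Hⁿ(π_V(E ∩ B(x,r))) ≥ δ'rⁿ for every V ∈ B(V_{x,r}, δ'). -/

import Mathlib

open MeasureTheory Metric Module Set
open scoped ENNReal NNReal RealInnerProductSpace

noncomputable section

/-- Euclidean space `ℝ^d`. -/
abbrev Euc (d : ℕ) : Type := EuclideanSpace ℝ (Fin d)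

/-- Orthogonal projection onto a subspace, as a map `ℝ^d → ℝ^d`. -/
noncomputable def projCLM {d : ℕ} (V : Submodule ℝ (Euc d)) : Euc d →L[ℝ] Euc d :=
  V.subtypeL.comp (V.orthogonalProjection)

/-- `E` is `n`-Ahlfors–David regular with constants `C₁ ≤ C₂`. -/
def IsADR {d : ℕ} (n : ℕ) (C₁ C₂ : ℝ) (E : Set (Euc d)) : Prop :=
  0 < C₁ ∧ C₁ ≤ C₂ ∧ ∀ x ∈ E, ∀ r : ℝ, 0 < r → ENNReal.ofReal r ≤ EMetric.diam E →
    ENNReal.ofReal (C₁ * r ^ n) ≤ μH[n] (E ∩ closedBall x r) ∧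
      μH[n] (E ∩ closedBall x r) ≤ ENNReal.ofReal (C₂ * r ^ n)

/-- `Γ` is an `n`-dimensional Lipschitz graph with Lipschitz constant at most `M`:
`Γ = {p + A p : p ∈ P}` for an `n`-dimensional subspace `P` and `M`-Lipschitz `A : P → P^⊥`. -/
def IsLipGraph {d : ℕ} (n : ℕ) (M : ℝ≥0) (Γ : Set (Euc d)) : Prop :=
  ∃ (P : Submodule ℝ (Euc d)) (A : P → Pᗮ), finrank ℝ P = n ∧ LipschitzWith M A ∧
    Γ = {x | ∃ p : P, x = (p : Euc d) + (A p : Euc d)}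

/-- `E` has big pieces of Lipschitz graphs with constants `M` and `δ`. -/
def HasBPLG {d : ℕ} (n : ℕ) (M : ℝ≥0) (δ : ℝ) (E : Set (Euc d)) : Prop :=
  0 < δ ∧ ∀ x ∈ E, ∀ r : ℝ, 0 < r → ENNReal.ofReal r ≤ EMetric.diam E →
    ∃ Γ : Set (Euc d), IsLipGraph n M Γ ∧
      ENNReal.ofReal (δ * r ^ n) ≤ μH[n] (E ∩ Γ ∩ closedBall x r)

/-- The coordinate subspace `ℝⁿ × {0} ⊆ ℝ^d`. -/
def coordSubspace (d n : ℕ) : Submodule ℝ (Euc d) where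
  carrier := {x | ∀ i : Fin d, n ≤ (i : ℕ) → x i = 0}
  add_mem' := by
    intro a b ha hb i hi
    simp [PiLp.add_apply, ha i hi, hb i hi]
  zero_mem' := by intro i hi; rfl
  smul_mem' := by
    intro c a ha i hi
    simp [PiLp.smul_apply, ha i hi]

/-- The closed ball of radius `ρ` around `W` in the Grassmannian `G(d,n)`, realised as a set
of subspaces of `ℝ^d`, with the metric `‖V - W‖ = ‖π_V - π_W‖` (operator norm). -/
def grBall {d : ℕ} (n : ℕ) (W : Submodule ℝ (Euc d)) (ρ : ℝ) : Set (Submodule ℝ (Euc d)) :=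
  {V | finrank ℝ V = n ∧ ‖projCLM V - projCLM W‖ ≤ ρ}

/-- The Borel σ-algebra on subspaces of `ℝ^d`, induced by `V ↦ π_V`. -/
instance grassMeasurableSpace (d : ℕ) : MeasurableSpace (Submodule ℝ (Euc d)) :=
  MeasurableSpace.comap (fun V => projCLM V) (borel (Euc d →L[ℝ] Euc d))

/-- The orthogonal group `O(d)`. -/
abbrev OG (d : ℕ) := Matrix.orthogonalGroup (Fin d) ℝ

instance (d : ℕ) : MeasurableSpace (OG d) := borel _

/-- `μ` is the Haar probability measure on the orthogonal group `O(d)`: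
a left-invariant Borel probability measure. -/
def IsHaarProb {d : ℕ} (μ : Measure (OG d)) : Prop :=
  IsProbabilityMeasure μ ∧ ∀ g : OG d, Measure.map (fun h => g * h) μ = μ

/-- The measure `γ_{d,n}` on the Grassmannian: the pushforward of the Haar probability
measure `μ` on `O(d)` under the map `g ↦ g(ℝⁿ × {0})`. -/
def grassmannOf {d : ℕ} (n : ℕ) (μ : Measure (OG d)) : Measure (Submodule ℝ (Euc d)) :=
  Measure.map
    (fun g : OG d => (coordSubspace d n).map
      (Matrix.toEuclideanLin (g : Matrix (Fin d) (Fin d) ℝ))) μ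

/-- The pushforward `π_{V♯}(Hⁿ|_E)` of `Hⁿ` restricted to `E` under the orthogonal
projection onto `V`. -/
def projPush {d : ℕ} (n : ℕ) (E : Set (Euc d)) (V : Submodule ℝ (Euc d)) : Measure (Euc d) :=
  Measure.map (projCLM V) (μH[n].restrict E)

/-- `Hⁿ` on the subspace `V`. -/
def hausdorffOn {d : ℕ} (n : ℕ) (V : Submodule ℝ (Euc d)) : Measure (Euc d) :=
  μH[n].restrict (V : Set (Euc d))

/-- The squared `L²(V)`-norm of the Radon–Nikodym derivative of `π_{V♯}(Hⁿ|_E)` with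
respect to `Hⁿ` on `V`. -/
def pushL2sq {d : ℕ} (n : ℕ) (E : Set (Euc d)) (V : Submodule ℝ (Euc d)) : ℝ≥0∞ :=
  ∫⁻ z, ((projPush n E V).rnDeriv (hausdorffOn n V) z) ^ 2 ∂(hausdorffOn n V)

/-- `π_{V♯}(Hⁿ|_E) ∈ L²(V)`: the pushforward is absolutely continuous with respect to `Hⁿ`
on `V`, with square-integrable density. -/
def MemL2 {d : ℕ} (n : ℕ) (E : Set (Euc d)) (V : Submodule ℝ (Euc d)) : Prop :=
  projPush n E V ≪ hausdorffOn n V ∧ pushL2sq n E V < ∞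

/-- The (two-sided) cone `X(x, V, α) = {y : |π_{V^⊥}(x - y)| ≤ α |x - y|}`. -/
def cone {d : ℕ} (V : Submodule ℝ (Euc d)) (x : Euc d) (α : ℝ) : Set (Euc d) :=
  {y | ‖projCLM Vᗮ (x - y)‖ ≤ α * ‖x - y‖}

/-- The truncated cone `X(x, V, α, R, r)`. -/
def coneAnn {d : ℕ} (V : Submodule ℝ (Euc d)) (x : Euc d) (α R r : ℝ) : Set (Euc d) :=
  cone V x α ∩ (closedBall x R \ ball x r)

/-- The vertical cone `X(x, α) := X(x, {0} × ℝ^{d-n}, α) = {y : |π_{ℝⁿ×{0}}(x-y)| ≤ α|x-y|}`. -/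
def vertCone {d : ℕ} (n : ℕ) (x : Euc d) (α : ℝ) : Set (Euc d) :=
  {y | ‖projCLM (coordSubspace d n) (x - y)‖ ≤ α * ‖x - y‖}

/-- The truncated vertical cone `X(x, α, R, r)`. -/
def vertConeAnn {d : ℕ} (n : ℕ) (x : Euc d) (α R r : ℝ) : Set (Euc d) :=
  vertCone n x α ∩ (closedBall x R \ ball x r)

/-- `E` satisfies the `n`-dimensional `(θ, M)`-property: for every `x ∈ E` at most `M`
dyadic scales `j` have `X(x, θ, 2^{-j}, 2^{-j-1}) ∩ E ≠ ∅`. -/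
def ThetaMProp {d : ℕ} (n : ℕ) (θ : ℝ) (M : ℕ) (E : Set (Euc d)) : Prop :=
  ∀ x ∈ E,
    {j : ℤ | (vertConeAnn n x θ (2 ^ (-j)) (2 ^ (-j - 1)) ∩ E).Nonempty}.Finite ∧
    {j : ℤ | (vertConeAnn n x θ (2 ^ (-j)) (2 ^ (-j - 1)) ∩ E).Nonempty}.ncard ≤ M

/-- The one-sided cone `X⁺(x, w, α)` in direction `w`. -/
def oneSidedCone {d : ℕ} (w : Euc d) (x : Euc d) (α : ℝ) : Set (Euc d) :=
  {y | ‖projCLM (Submodule.span ℝ {w})ᗮ (x - y)‖ ≤ α * ‖x - y‖ ∧ 0 ≤ ⟪y - x, w⟫}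

/-- The truncated one-sided cone `X⁺(x, w, α, R, r)`. -/
def oneSidedConeAnn {d : ℕ} (w : Euc d) (x : Euc d) (α R r : ℝ) : Set (Euc d) :=
  oneSidedCone w x α ∩ (closedBall x R \ ball x r)

/-- Combining `x ∈ ℝⁿ` and `y ∈ ℝ^{d-n}` into a point of `ℝ^d = ℝⁿ × ℝ^{d-n}`. -/
def pairFun {d n : ℕ} (x : Euc n) (y : Euc (d - n)) : Euc d :=
  WithLp.toLp 2 (fun i : Fin d => if h' : (i : ℕ) < n then x ⟨i, h'⟩ else y ⟨(i : ℕ) - n, by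
    have := i.isLt; omega⟩)

/-!
Take for `V_{x,r}` the base plane `P` of a big Lipschitz graph piece `Γ = {p + A p}` of `E` in
`B(x, r)`. On `Γ` the projection `π_P` is inverse-Lipschitz with constant `√(1 + M²)`, since the
vertical part `A p - A q` of `a - b` is at most `M` times its horizontal part. If
`‖π_V - π_P‖ ≤ 1 / (2√(1 + M²))`, replacing `π_P` by `π_V` costs at most half of `‖a - b‖`, so `π_V`
is still inverse-Lipschitz on `Γ` with constant `K = 2√(1 + M²)`. Hence
`Hⁿ(π_V(E ∩ B(x, r))) ≥ K⁻ⁿ Hⁿ(E ∩ Γ ∩ B(x, r)) ≥ K⁻ⁿ δ rⁿ`.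
-/

theorem hausdorffMeasure_le_mul_hausdorffMeasure_image {X Y : Type*} [MetricSpace X]
    [MeasurableSpace X] [BorelSpace X] [MetricSpace Y] [MeasurableSpace Y] [BorelSpace Y]
    {f : X → Y} {s : Set X} {K : ℝ≥0} {d : ℝ} (hd : 0 ≤ d)
    (hf : ∀ a ∈ s, ∀ b ∈ s, dist a b ≤ K * dist (f a) (f b)) :
    μH[d] s ≤ (K : ℝ≥0∞) ^ d * μH[d] (f '' s) := by
  have hanti : AntilipschitzWith K (s.domRestrict f) :=
    AntilipschitzWith.of_le_mul_dist fun a b => hf a a.2 b b.2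
  calc μH[d] s = μH[d] (univ : Set s) := by
        rw [← (isometry_subtype_coe (s := s)).hausdorffMeasure_image (Or.inl hd), image_univ,
          Subtype.range_coe]
    _ ≤ (K : ℝ≥0∞) ^ d * μH[d] (s.domRestrict f '' univ) :=
        hanti.le_hausdorffMeasure_image hd _
    _ = (K : ℝ≥0∞) ^ d * μH[d] (f '' s) := by rw [image_univ, range_domRestrict]

theorem ContinuousLinearMap.norm_le_two_mul_of_norm_sub_le {E F : Type*}
    [SeminormedAddCommGroup E] [NormedSpace ℝ E] [SeminormedAddCommGroup F] [NormedSpace ℝ F]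
    {T T' : E →L[ℝ] F} {v : E} {L ρ : ℝ} (hL : 0 ≤ L) (hv : ‖v‖ ≤ L * ‖T v‖)
    (hT : ‖T' - T‖ ≤ ρ) (hLρ : L * ρ ≤ 1 / 2) :
    ‖v‖ ≤ 2 * L * ‖T' v‖ := by
  have hTv : ‖T v‖ ≤ ‖T' v‖ + ρ * ‖v‖ :=
    calc ‖T v‖ = ‖T' v - (T' - T) v‖ := by simp
      _ ≤ ‖T' v‖ + ‖(T' - T) v‖ := norm_sub_le _ _
      _ ≤ ‖T' v‖ + ρ * ‖v‖ := by
          gcongr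
          exact (T' - T).le_of_opNorm_le hT v
  have : ‖v‖ ≤ L * ‖T' v‖ + L * ρ * ‖v‖ := by
    nlinarith [mul_le_mul_of_nonneg_left hTv hL]
  nlinarith [mul_le_mul_of_nonneg_right hLρ (norm_nonneg v)]

section Projection

variable {d : ℕ} {P : Submodule ℝ (Euc d)}

theorem projCLM_apply_of_mem {v : Euc d} (hv : v ∈ P) : projCLM P v = v := by
  simpa [projCLM] using P.starProjection_eq_self_iff.mpr hv

theorem projCLM_apply_of_mem_orthogonal {v : Euc d} (hv : v ∈ Pᗮ) : projCLM P v = 0 := by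
  simpa [projCLM] using P.starProjection_apply_eq_zero_iff.mpr hv

theorem norm_add_le_sqrt_mul_norm_projCLM {u w : Euc d} {M : ℝ} (hu : u ∈ P) (hw : w ∈ Pᗮ)
    (huw : ‖w‖ ≤ M * ‖u‖) :
    ‖u + w‖ ≤ √(1 + M ^ 2) * ‖projCLM P (u + w)‖ := by
  have hproj : projCLM P (u + w) = u := by
    rw [map_add, projCLM_apply_of_mem hu, projCLM_apply_of_mem_orthogonal hw, add_zero]
  have hsq : ‖u + w‖ ^ 2 ≤ (1 + M ^ 2) * ‖u‖ ^ 2 := by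
    rw [norm_add_sq_real, Submodule.inner_right_of_mem_orthogonal hu hw]
    nlinarith [norm_nonneg w, norm_nonneg u]
  rw [hproj, ← Real.sqrt_sq (norm_nonneg u), ← Real.sqrt_mul (by positivity)]
  exact Real.le_sqrt_of_sq_le hsq

theorem dist_le_mul_dist_projCLM_of_mem_graph {M : ℝ≥0} {A : P → Pᗮ} (hA : LipschitzWith M A)
    {V : Submodule ℝ (Euc d)} {ρ : ℝ} (hV : ‖projCLM V - projCLM P‖ ≤ ρ)
    (hρ : √(1 + (M : ℝ) ^ 2) * ρ ≤ 1 / 2) (p q : P) :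
    dist ((p : Euc d) + A p) (q + A q) ≤
      2 * √(1 + (M : ℝ) ^ 2) * dist (projCLM V (p + A p)) (projCLM V (q + A q)) := by
  have hgraph : ‖((p : Euc d) + A p) - (q + A q)‖ ≤
      √(1 + (M : ℝ) ^ 2) * ‖projCLM P (((p : Euc d) + A p) - (q + A q))‖ := by
    rw [add_sub_add_comm]
    refine norm_add_le_sqrt_mul_norm_projCLM (P.sub_mem p.2 q.2) (Pᗮ.sub_mem (A p).2 (A q).2) ?_
    simpa [dist_eq_norm] using hA.dist_le_mul p q
  rw [dist_eq_norm, dist_eq_norm, ← map_sub]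
  exact ContinuousLinearMap.norm_le_two_mul_of_norm_sub_le (by positivity) hgraph hV hρ

end Projection

theorem stmt17_general (n d : ℕ) (M : ℝ≥0) (δ C₁ C₂ : ℝ)
    (hδ : 0 < δ) :
    ∃ δ' : ℝ, 0 < δ' ∧
      ∀ E : Set (Euc d), IsADR n C₁ C₂ E → HasBPLG n M δ E →
        ∀ x ∈ E, ∀ r : ℝ, 0 < r → ENNReal.ofReal r ≤ EMetric.diam E →
          ∃ V : Submodule ℝ (Euc d), finrank ℝ V = n ∧
            ∀ V' ∈ grBall n V δ',
              ENNReal.ofReal (δ' * r ^ n) ≤ μH[n] (projCLM V' '' (E ∩ closedBall x r)) := by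
  set L : ℝ := √(1 + (M : ℝ) ^ 2)
  have hL : 0 < L := Real.sqrt_pos.mpr (by positivity)
  set K : ℝ≥0 := (2 * L).toNNReal
  have hK : (K : ℝ) = 2 * L := Real.coe_toNNReal _ (by positivity)
  have hKn : 0 < (K : ℝ) ^ n := by positivity
  refine ⟨min (1 / (2 * L)) (δ / K ^ n), by positivity, ?_⟩
  intro E _ hBPLG x hx r hr hrE
  obtain ⟨Γ, ⟨P, A, hP, hA, rfl⟩, hΓ⟩ := hBPLG.2 x hx r hr hrE
  refine ⟨P, hP, fun V ⟨_, hV⟩ => ?_⟩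
  set S := E ∩ {x | ∃ p : P, x = p + A p} ∩ closedBall x r
  have hanti : ∀ a ∈ S, ∀ b ∈ S,
      dist a b ≤ K * dist (projCLM V a) (projCLM V b) := by
    rintro _ ⟨⟨-, p, rfl⟩, -⟩ _ ⟨⟨-, q, rfl⟩, -⟩
    rw [hK]
    refine dist_le_mul_dist_projCLM_of_mem_graph hA hV ?_ p q
    calc L * min (1 / (2 * L)) (δ / K ^ n) ≤ L * (1 / (2 * L)) := by gcongr; exact min_le_left _ _
      _ = 1 / 2 := by field_simp
  have hμ := hausdorffMeasure_le_mul_hausdorffMeasure_image (Nat.cast_nonneg n) hanti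
  rw [ENNReal.rpow_natCast, ← ENNReal.ofReal_coe_nnreal, ← ENNReal.ofReal_pow K.coe_nonneg]
    at hμ
  calc ENNReal.ofReal (min (1 / (2 * L)) (δ / K ^ n) * r ^ n)
      ≤ ENNReal.ofReal (δ * r ^ n) / ENNReal.ofReal (K ^ n) := by
        rw [← ENNReal.ofReal_div_of_pos hKn]
        gcongr
        rw [mul_div_right_comm]
        gcongr
        exact min_le_right _ _
    _ ≤ μH[n] (projCLM V '' S) :=
        ENNReal.div_le_of_le_mul' (hΓ.trans hμ)
    _ ≤ μH[n] (projCLM V '' (E ∩ closedBall x r)) :=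
        measure_mono (image_mono fun y hy => ⟨hy.1.1, hy.2⟩)

/-- BPLG implies big projections in plenty of directions (BPPD). -/
theorem stmt17 (n d : ℕ) (hn : 1 ≤ n) (hnd : n < d) (M : ℝ≥0) (δ C₁ C₂ : ℝ)
    (hδ : 0 < δ) :
    ∃ δ' : ℝ, 0 < δ' ∧
      ∀ E : Set (Euc d), IsADR n C₁ C₂ E → HasBPLG n M δ E →
        ∀ x ∈ E, ∀ r : ℝ, 0 < r → ENNReal.ofReal r ≤ EMetric.diam E →
          ∃ V : Submodule ℝ (Euc d), finrank ℝ V = n ∧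
            ∀ V' ∈ grBall n V δ',
              ENNReal.ofReal (δ' * r ^ n) ≤ μH[n] (projCLM V' '' (E ∩ closedBall x r)) :=
  stmt17_general n d M δ C₁ C₂ hδ
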